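/- The bilinear form φ on the twisted Schrödinger-Virasoro algebra defined on basis elements by φ(L_n, L_m) = ((n³−n)/12)·δ_{m,−n} and zero on all other pairs is a Leibniz 2-cocycle that is not a Leibniz 2-coboundary. -/

import Mathlib

abbrev B : Type := ℤ ⊕ ℤ ⊕ ℤ
abbrev V : Type := B →₀ ℂ

noncomputable def Lg (n : ℤ) : V := Finsupp.single (Sum.inl n) 1
noncomputable def Yg (n : ℤ) : V := Finsupp.single (Sum.inr (Sum.inl n)) 1
noncomputable def Mg (n : ℤ) : V := Finsupp.single (Sum.inr (Sum.inr n)) 1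

/-- Bracket on basis elements of the twisted Schrödinger–Virasoro algebra. -/
noncomputable def brB : B → B → V
  | Sum.inl n, Sum.inl m => ((m : ℂ) - n) • Lg (n + m)
  | Sum.inl n, Sum.inr (Sum.inl m) => ((m : ℂ) - n / 2) • Yg (n + m)
  | Sum.inl n, Sum.inr (Sum.inr p) => (p : ℂ) • Mg (n + p)
  | Sum.inr (Sum.inl m), Sum.inl n => -(((m : ℂ) - n / 2) • Yg (n + m))
  | Sum.inr (Sum.inr p), Sum.inl n => -((p : ℂ) • Mg (n + p))
  | Sum.inr (Sum.inl m), Sum.inr (Sum.inl m') => ((m' : ℂ) - m) • Mg (m + m')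
  | _, _ => 0

/-- The bilinear extension of the bracket to the whole space. -/
noncomputable def bk : V →ₗ[ℂ] V →ₗ[ℂ] V :=
  Finsupp.lsum ℂ fun a => LinearMap.toSpanSingleton ℂ (V →ₗ[ℂ] V)
    (Finsupp.lsum ℂ fun b => LinearMap.toSpanSingleton ℂ V (brB a b))

/-- `φ` is a Leibniz 2-cocycle on the twisted Schrödinger–Virasoro algebra. -/
def IsLeibnizCocycle (φ : V →ₗ[ℂ] V →ₗ[ℂ] ℂ) : Prop :=
  ∀ x y z : V, φ x (bk y z) = φ (bk x y) z - φ (bk x z) y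

/-- The Virasoro Leibniz cocycle on basis elements. -/
noncomputable def virB : B → B → ℂ
  | Sum.inl n, Sum.inl m => if m = -n then ((n : ℂ) ^ 3 - n) / 12 else 0
  | _, _ => 0

/-- The bilinear extension of the Virasoro cocycle. -/
noncomputable def vir : V →ₗ[ℂ] V →ₗ[ℂ] ℂ :=
  Finsupp.lsum ℂ fun a => LinearMap.toSpanSingleton ℂ (V →ₗ[ℂ] ℂ)
    (Finsupp.lsum ℂ fun b => LinearMap.toSpanSingleton ℂ ℂ (virB a b))

/-!
Both sides of the cocycle identity are trilinear, so it suffices to check it on basis vectors.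
Since the bracket of `L` with `Y` or `M` lies in the span of the `Y`s and `M`s, where `φ` vanishes,
only triples `(L_a, L_b, L_c)` with `a + b + c = 0` contribute, and for those the identity is the
classical one for the Virasoro cocycle.

A coboundary `f ∘ [·,·]` takes the value `f([L_n, L_{-n}]) = -2n f(L_0)`, which is linear in `n`,
whereas `(n³ - n) / 12` is not: `n = 1` forces `f(L_0) = 0` and then `n = 2` gives `1/2 = 0`.
-/

open Finsupp

lemma bk_single_single (a b : B) (c d : ℂ) :
    bk (single a c) (single b d) = (c * d) • brB a b := by
  simp [bk, lsum_single, LinearMap.toSpanSingleton_apply, smul_smul]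

lemma vir_single_single (a b : B) (c d : ℂ) :
    vir (single a c) (single b d) = c * d * virB a b := by
  simp [vir, lsum_single, LinearMap.toSpanSingleton_apply, smul_eq_mul]
  ring

lemma bk_Lg_Lg (n m : ℤ) : bk (Lg n) (Lg m) = ((m : ℂ) - n) • Lg (n + m) := by
  simp [Lg, bk_single_single, brB]

lemma vir_Lg_Lg (n m : ℤ) :
    vir (Lg n) (Lg m) = if m = -n then ((n : ℂ) ^ 3 - n) / 12 else 0 := by
  simp [Lg, vir_single_single, virB]

lemma isLeibnizCocycle_of_single {φ : V →ₗ[ℂ] V →ₗ[ℂ] ℂ}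
    (h : ∀ a b c : B,
      φ (single a 1) (brB b c) = φ (brB a b) (single c 1) - φ (brB a c) (single b 1)) :
    IsLeibnizCocycle φ := by
  have hz : ∀ a b z, φ (single a 1) (bk (single b 1) z) =
      φ (bk (single a 1) (single b 1)) z - φ (bk (single a 1) z) (single b 1) := by
    intro a b z
    induction z using Finsupp.induction_linear with
    | zero => simp
    | add z z' hz hz' => simp only [map_add, LinearMap.add_apply, hz, hz']; ring
    | single c d =>
      rw [← smul_single_one c d]
      simp only [map_smul, LinearMap.smul_apply, smul_eq_mul, bk_single_single, one_mul, h]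
      ring
  have hy : ∀ a y z,
      φ (single a 1) (bk y z) = φ (bk (single a 1) y) z - φ (bk (single a 1) z) y := by
    intro a y z
    induction y using Finsupp.induction_linear with
    | zero => simp
    | add y y' hy hy' => simp only [map_add, LinearMap.add_apply, hy, hy']; ring
    | single b d =>
      rw [← smul_single_one b d]
      simp only [map_smul, LinearMap.smul_apply, smul_eq_mul, hz]; ring
  intro x y z
  induction x using Finsupp.induction_linear with
  | zero => simp
  | add x x' hx hx' => simp only [map_add, LinearMap.add_apply, hx, hx']; ring
  | single a d =>
    rw [← smul_single_one a d]
    simp only [map_smul, LinearMap.smul_apply, smul_eq_mul, hy]; ring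

/-- The classical Virasoro cocycle identity, arranged as `φ(L_a, [L_b, L_c])` =
`φ([L_a, L_b], L_c) - φ([L_a, L_c], L_b)` with `φ(L_n, L_{-n}) = (n³ - n) / 12`. -/
lemma virasoro_cocycle_identity {K : Type*} [Field K] (a b c : K) (h : a + b + c = 0) :
    (c - b) * ((a ^ 3 - a) / 12) =
      (b - a) * (((a + b) ^ 3 - (a + b)) / 12) - (c - a) * (((a + c) ^ 3 - (a + c)) / 12) := by
  obtain rfl : c = -a - b := by linear_combination h
  ring

lemma vir_single_brB (a b c : B) :
    vir (single a 1) (brB b c) = vir (brB a b) (single c 1) - vir (brB a c) (single b 1) := by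
  rcases a with n | m | p <;> rcases b with n' | m' | p' <;> rcases c with n'' | m'' | p''
  case inl.inl.inl =>
    change vir (Lg n) (((n'' : ℂ) - n') • Lg (n' + n'')) =
      vir (((n' : ℂ) - n) • Lg (n + n')) (Lg n'') - vir (((n'' : ℂ) - n) • Lg (n + n'')) (Lg n')
    simp only [map_smul, LinearMap.smul_apply, smul_eq_mul, vir_Lg_Lg]
    by_cases hsum : n + n' + n'' = 0
    · rw [if_pos (by omega), if_pos (by omega), if_pos (by omega)]
      push_cast
      exact virasoro_cocycle_identity (n : ℂ) n' n'' (by exact_mod_cast hsum)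
    · rw [if_neg (by omega), if_neg (by omega), if_neg (by omega)]
      ring
  all_goals simp [brB, Lg, Yg, Mg, virB, vir_single_single]

/-- The Virasoro cocycle is a Leibniz 2-cocycle which is not a Leibniz 2-coboundary. -/
theorem stmt17 :
    IsLeibnizCocycle vir ∧ ¬ ∃ f : V →ₗ[ℂ] ℂ, ∀ x y : V, vir x y = f (bk x y) := by
  refine ⟨isLeibnizCocycle_of_single vir_single_brB, ?_⟩
  rintro ⟨f, hf⟩
  have h1 := hf (Lg 1) (Lg (-1))
  have h2 := hf (Lg 2) (Lg (-2))
  simp only [bk_Lg_Lg, vir_Lg_Lg, map_smul, smul_eq_mul] at h1 h2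
  norm_num at h1 h2
  norm_num [h1] at h2
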